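/- arXiv:0908.2750 — 2 statements merged into one kernel-verified Lean document; each statement's English description precedes it below -/
import Mathlib

section
/- Let C_n be the cycle on n vertices, let r ≥ 1, and assume 3r+2 ≤ n ≤ 4r+1. Then D ⊆ V(C_n) is an r-identifying code if and only if for every i ∈ {1,...,n}, x_i ∈ D or x_{i+2r+1} ∈ D (indices mod n). -/
/-- `Dr G r D x` = `N_r[x] ∩ D`. -/
def Dr {V : Type*} (G : SimpleGraph V) (r : ℕ) (D : Set V) (x : V) : Set V :=
  {y | y ∈ D ∧ G.dist x y ≤ r}

/-- `D` is an `r`-identifying code of `G`. -/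
def IsIdCode {V : Type*} (G : SimpleGraph V) (r : ℕ) (D : Set V) : Prop :=
  (∀ x, (Dr G r D x).Nonempty) ∧ ∀ x y, x ≠ y → Dr G r D x ≠ Dr G r D y

/-- `D` is an `r`-locating-dominating set of `G`. -/
def IsLD {V : Type*} (G : SimpleGraph V) (r : ℕ) (D : Set V) : Prop :=
  (∀ x ∉ D, (Dr G r D x).Nonempty) ∧
    ∀ x ∉ D, ∀ y ∉ D, x ≠ y → Dr G r D x ≠ Dr G r D y

/-- The cycle graph on `ZMod n`. -/
def cycleG (n : ℕ) : SimpleGraph (ZMod n) :=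
  SimpleGraph.fromRel (fun x y => x - y = 1)




section helpers
variable {n : ℕ}

lemma zmodOneNeZero (hn : 2 ≤ n) : (1 : ZMod n) ≠ 0 := by
  haveI : Fact (1 < n) := ⟨hn⟩
  exact one_ne_zero

lemma cyc_adj_succ (hn : 2 ≤ n) (x : ZMod n) : (cycleG n).Adj x (x + 1) := by
  rw [cycleG, SimpleGraph.fromRel_adj]
  refine ⟨?_, Or.inr (by ring)⟩
  intro h
  exact zmodOneNeZero hn (by linear_combination h.symm)

lemma cyc_walk (hn : 2 ≤ n) : ∀ (k : ℕ) (x : ZMod n),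
    ∃ w : (cycleG n).Walk x (x + (k : ZMod n)), w.length = k
  | 0, x => ⟨SimpleGraph.Walk.nil.copy rfl (by simp), by simp⟩
  | (k+1), x => by
      obtain ⟨w, hw⟩ := cyc_walk hn k (x + 1)
      refine ⟨SimpleGraph.Walk.cons (cyc_adj_succ hn x)
        (w.copy rfl (by push_cast; ring)), by simp [hw]⟩

lemma key_step (hn : 2 ≤ n) (c : ZMod n) :
    min (c + 1).val (-(c + 1)).val ≤ min c.val (-c).val + 1 := by
  haveI : NeZero n := ⟨by omega⟩
  haveI : Fact (1 < n) := ⟨hn⟩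
  have hc : c.val < n := ZMod.val_lt c
  by_cases h0 : c.val + 1 = n
  · have hc10 : c + 1 = 0 := by
      have hcc : ((c.val : ℕ) : ZMod n) = c := by rw [ZMod.natCast_val, ZMod.cast_id]
      calc c + 1 = ((c.val + 1 : ℕ) : ZMod n) := by push_cast [hcc]; ring
        _ = ((n : ℕ) : ZMod n) := by rw [h0]
        _ = 0 := ZMod.natCast_self n
    simp [hc10]
  · have h1 : (c + 1).val = c.val + 1 := by
      rw [ZMod.val_add, ZMod.val_one, Nat.mod_eq_of_lt (by omega)]
    have hne : c + 1 ≠ 0 := by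
      intro h
      rw [h, ZMod.val_zero] at h1
      omega
    have h2 : (-(c + 1)).val = n - (c.val + 1) := by
      rw [ZMod.neg_val, if_neg hne, h1]
    by_cases hz : c = 0
    · simp [hz, h1, h2, ZMod.val_zero] at *
      omega
    · have h3 : (-c).val = n - c.val := by rw [ZMod.neg_val, if_neg hz]
      have h4 : c.val ≠ 0 := fun h => hz ((ZMod.val_eq_zero c).mp h)
      rw [h1, h2, h3]
      omega

lemma cyc_step (hn : 2 ≤ n) {x b : ZMod n} (h : (cycleG n).Adj x b) (y : ZMod n) :
    min (x - y).val (y - x).val ≤ min (b - y).val (y - b).val + 1 := by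
  rw [cycleG, SimpleGraph.fromRel_adj] at h
  rcases h.2 with h1 | h1
  · have e1 : x - y = (b - y) + 1 := by linear_combination h1
    have e2 : y - x = -((b - y) + 1) := by linear_combination -h1
    rw [e1, e2]
    refine le_trans (key_step hn (b - y)) ?_
    rw [neg_sub]
  · have e1 : y - x = (y - b) + 1 := by linear_combination h1
    have e2 : x - y = -((y - b) + 1) := by linear_combination -h1
    rw [e1, e2, min_comm]
    refine le_trans (key_step hn (y - b)) ?_
    rw [neg_sub, min_comm]

lemma cyc_lower (hn : 2 ≤ n) {x y : ZMod n} (w : (cycleG n).Walk x y) :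
    min (x - y).val (y - x).val ≤ w.length := by
  haveI : NeZero n := ⟨by omega⟩
  induction w with
  | nil => simp
  | @cons a b c h p ih =>
      rw [SimpleGraph.Walk.length_cons]
      exact le_trans (cyc_step hn h c) (by omega)

lemma cyc_dist (hn : 2 ≤ n) (x y : ZMod n) :
    (cycleG n).dist x y = min (x - y).val (y - x).val := by
  haveI : NeZero n := ⟨by omega⟩
  have hxy : x + (((y - x).val : ℕ) : ZMod n) = y := by
    rw [ZMod.natCast_val, ZMod.cast_id]; ring
  have hyx : y + (((x - y).val : ℕ) : ZMod n) = x := by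
    rw [ZMod.natCast_val, ZMod.cast_id]; ring
  obtain ⟨w1, hw1⟩ := cyc_walk hn (y - x).val x
  obtain ⟨w2, hw2⟩ := cyc_walk hn (x - y).val y
  apply le_antisymm
  · refine le_min ?_ ?_
    · rw [SimpleGraph.dist_comm]
      have := SimpleGraph.dist_le (w2.copy rfl hyx)
      rwa [SimpleGraph.Walk.length_copy, hw2] at this
    · have := SimpleGraph.dist_le (w1.copy rfl hxy)
      rwa [SimpleGraph.Walk.length_copy, hw1] at this
  · obtain ⟨p, hp⟩ := SimpleGraph.Reachable.exists_walk_length_eq_dist ⟨w1.copy rfl hxy⟩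
    rw [← hp]
    exact cyc_lower hn p

lemma cyc_ball {r : ℕ} (hn : 2 ≤ n) (_hrn : r < n) (x z : ZMod n) :
    (cycleG n).dist x z ≤ r ↔ ((z - x).val ≤ r ∨ n - (z - x).val ≤ r) := by
  haveI : NeZero n := ⟨by omega⟩
  rw [cyc_dist hn]
  have h1 : x - z = -(z - x) := by ring
  rw [h1, ZMod.neg_val]
  have hv := ZMod.val_lt (z - x)
  split_ifs with h2
  · have h0 : (z - x).val = 0 := (ZMod.val_eq_zero _).mpr h2
    omega
  · have h0 : (z - x).val ≠ 0 := fun h => h2 ((ZMod.val_eq_zero _).mp h)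
    omega

lemma val_sub_one (hn : 2 ≤ n) (c : ZMod n) :
    (c.val = 0 ∧ (c - 1).val = n - 1) ∨ (1 ≤ c.val ∧ (c - 1).val = c.val - 1) := by
  haveI : NeZero n := ⟨by omega⟩
  haveI : Fact (1 < n) := ⟨hn⟩
  have hm1 : ((-1 : ZMod n)).val = n - 1 := by
    rw [ZMod.neg_val, if_neg (zmodOneNeZero hn), ZMod.val_one]
  by_cases hz : c = 0
  · left
    refine ⟨(ZMod.val_eq_zero c).mpr hz, ?_⟩
    rw [hz, zero_sub, hm1]
  · right
    have h4 : c.val ≠ 0 := fun h => hz ((ZMod.val_eq_zero c).mp h)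
    have hc : c.val < n := ZMod.val_lt c
    refine ⟨by omega, ?_⟩
    have : c - 1 = c + (-1) := by ring
    rw [this, ZMod.val_add, hm1]
    have : c.val + (n - 1) = (c.val - 1) + n := by omega
    rw [this, Nat.add_mod_right, Nat.mod_eq_of_lt (by omega)]

end helpers

lemma valNeg {n : ℕ} (hn : 2 ≤ n) {k : ℕ} (h1 : 1 ≤ k) (h2 : k < n) :
    ((-(k : ZMod n))).val = n - k := by
  haveI : NeZero n := ⟨by omega⟩
  rw [ZMod.neg_val, if_neg, ZMod.val_cast_of_lt h2]
  intro h
  have h3 := congrArg ZMod.val h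
  rw [ZMod.val_cast_of_lt h2, ZMod.val_zero] at h3
  omega

lemma caseA {n r : ℕ} (hr : 1 ≤ r) (hn1 : 3*r+2 ≤ n) (hn2 : n ≤ 4*r+1)
    {D : Set (ZMod n)}
    (hstar : ∀ i : ZMod n, i ∈ D ∨ i + ((2*r+1 : ℕ) : ZMod n) ∈ D)
    (x y : ZMod n)
    (htrans : ∀ z ∈ D, ((cycleG n).dist x z ≤ r ↔ (cycleG n).dist y z ≤ r))
    (ht1 : 1 ≤ (y - x).val) (ht2 : (y - x).val ≤ n - 2*r - 1) : False := by
  haveI : NeZero n := ⟨by omega⟩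
  have hn : 2 ≤ n := by omega
  obtain ⟨t, ht⟩ : ∃ t, (y - x).val = t := ⟨_, rfl⟩
  rw [ht] at ht1 ht2
  have htlt : t < n := ht ▸ ZMod.val_lt _
  have hy : y = x + ((t : ℕ) : ZMod n) := by
    rw [← ht, ZMod.natCast_val, ZMod.cast_id]; ring
  rcases hstar (x - ((r : ℕ) : ZMod n)) with h | h
  · have hdx : (cycleG n).dist x (x - ((r:ℕ) : ZMod n)) ≤ r := by
      rw [cyc_ball hn (by omega)]
      have he : (x - ((r:ℕ):ZMod n) - x) = -((r:ℕ) : ZMod n) := by ring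
      rw [he, valNeg hn hr (by omega)]
      omega
    have hdy := (htrans _ h).mp hdx
    rw [cyc_ball hn (by omega)] at hdy
    have he : (x - ((r:ℕ):ZMod n) - y) = -(((t + r : ℕ) : ZMod n)) := by
      rw [hy]; push_cast; ring
    rw [he, valNeg hn (by omega) (by omega)] at hdy
    omega
  · have he : x - ((r:ℕ):ZMod n) + ((2*r+1 : ℕ) : ZMod n) = x + ((r+1 : ℕ) : ZMod n) := by
      push_cast; ring
    rw [he] at h
    have hdy : (cycleG n).dist y (x + ((r+1:ℕ):ZMod n)) ≤ r := by
      rw [cyc_ball hn (by omega)]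
      by_cases hc : t ≤ r + 1
      · have he2 : x + ((r+1:ℕ):ZMod n) - y = (((r+1-t : ℕ)) : ZMod n) := by
          rw [hy]; push_cast [Nat.cast_sub hc]; ring
        rw [he2, ZMod.val_cast_of_lt (by omega)]
        omega
      · have he2 : x + ((r+1:ℕ):ZMod n) - y = -(((t - (r+1) : ℕ)) : ZMod n) := by
          rw [hy]; push_cast [Nat.cast_sub (by omega : r+1 ≤ t)]; ring
        rw [he2, valNeg hn (by omega) (by omega)]
        omega
    have hdx := (htrans _ h).mpr hdy
    rw [cyc_ball hn (by omega)] at hdx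
    have he2 : (x + ((r+1:ℕ):ZMod n) - x) = ((r+1 : ℕ) : ZMod n) := by ring
    rw [he2, ZMod.val_cast_of_lt (by omega)] at hdx
    omega

theorem stmt2 (n r : ℕ) (hr : 1 ≤ r) (hn1 : 3*r+2 ≤ n) (hn2 : n ≤ 4*r+1)
    (D : Set (ZMod n)) :
    IsIdCode (cycleG n) r D ↔
      ∀ i : ZMod n, i ∈ D ∨ i + ((2*r+1 : ℕ) : ZMod n) ∈ D := by
  haveI : NeZero n := ⟨by omega⟩
  have hn : 2 ≤ n := by omega
  constructor
  · rintro ⟨hne, hsep⟩ i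
    by_contra hcon
    push_neg at hcon
    obtain ⟨hi1, hi2⟩ := hcon
    refine hsep (i + ((r:ℕ):ZMod n)) (i + ((r:ℕ):ZMod n) + 1) ?_ ?_
    · intro h
      exact zmodOneNeZero hn (by linear_combination -h)
    · ext z
      simp only [Dr, Set.mem_setOf_eq]
      have key : z ∈ D → ((cycleG n).dist (i + ((r:ℕ):ZMod n)) z ≤ r ↔
          (cycleG n).dist (i + ((r:ℕ):ZMod n) + 1) z ≤ r) := by
        intro hzD
        have hz : z = (i + ((r:ℕ):ZMod n)) + (((z - (i + ((r:ℕ):ZMod n))).val : ℕ) : ZMod n) := by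
          rw [ZMod.natCast_val, ZMod.cast_id]; ring
        have hza : (z - (i + ((r:ℕ):ZMod n))).val ≠ n - r := by
          intro h
          apply hi1
          have hzi : z = (i + ((r:ℕ):ZMod n)) + ((n - r : ℕ) : ZMod n) := by rw [← h]; exact hz
          have he : (i + ((r:ℕ):ZMod n)) + ((n - r : ℕ) : ZMod n) = i := by
            rw [Nat.cast_sub (by omega : r ≤ n), ZMod.natCast_self]; ring
          rw [he] at hzi
          rwa [← hzi]
        have hzb : (z - (i + ((r:ℕ):ZMod n))).val ≠ r + 1 := by
          intro h
          apply hi2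
          have hzi : z = (i + ((r:ℕ):ZMod n)) + ((r + 1 : ℕ) : ZMod n) := by rw [← h]; exact hz
          have he : (i + ((r:ℕ):ZMod n)) + ((r + 1 : ℕ) : ZMod n) = i + ((2*r+1 : ℕ) : ZMod n) := by
            push_cast; ring
          rw [he] at hzi
          rwa [← hzi]
        have hsub : z - ((i + ((r:ℕ):ZMod n)) + 1) = (z - (i + ((r:ℕ):ZMod n))) - 1 := by ring
        have hvlt : (z - (i + ((r:ℕ):ZMod n))).val < n := ZMod.val_lt _
        rw [cyc_ball hn (by omega), cyc_ball hn (by omega), hsub]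
        rcases val_sub_one hn (z - (i + ((r:ℕ):ZMod n))) with ⟨h1, h2⟩ | ⟨h1, h2⟩ <;>
          rw [h2] <;> omega
      constructor
      · rintro ⟨h1, h2⟩; exact ⟨h1, (key h1).mp h2⟩
      · rintro ⟨h1, h2⟩; exact ⟨h1, (key h1).mpr h2⟩
  · intro hstar
    refine ⟨?_, ?_⟩
    · intro x
      rcases hstar (x + ((r:ℕ):ZMod n)) with h | h
      · refine ⟨_, h, ?_⟩
        rw [cyc_ball hn (by omega)]
        have he : x + ((r:ℕ):ZMod n) - x = ((r:ℕ):ZMod n) := by ring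
        rw [he, ZMod.val_cast_of_lt (by omega : r < n)]
        omega
      · have he : x + ((r:ℕ):ZMod n) + ((2*r+1:ℕ):ZMod n) = x + ((3*r+1:ℕ):ZMod n) := by
          push_cast; ring
        rw [he] at h
        refine ⟨_, h, ?_⟩
        rw [cyc_ball hn (by omega)]
        have he2 : x + ((3*r+1:ℕ):ZMod n) - x = ((3*r+1:ℕ):ZMod n) := by ring
        rw [he2, ZMod.val_cast_of_lt (by omega : 3*r+1 < n)]
        omega
    · intro x y hxy hDr
      have htrans : ∀ z ∈ D, ((cycleG n).dist x z ≤ r ↔ (cycleG n).dist y z ≤ r) := by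
        intro z hz
        have hmem := Set.ext_iff.mp hDr z
        simp only [Dr, Set.mem_setOf_eq] at hmem
        exact ⟨fun h => (hmem.mp ⟨hz, h⟩).2, fun h => (hmem.mpr ⟨hz, h⟩).2⟩
      have ht0 : (y - x).val ≠ 0 := by
        intro h
        apply hxy
        have h2 : y - x = 0 := (ZMod.val_eq_zero _).mp h
        linear_combination -h2
      have htlt : (y - x).val < n := ZMod.val_lt _
      by_cases hA : (y - x).val ≤ n - 2*r - 1
      · exact caseA hr hn1 hn2 hstar x y htrans (by omega) hA
      by_cases hC : 2*r + 1 ≤ (y - x).val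
      · have hxv : (x - y).val = n - (y - x).val := by
          have he : x - y = -(y - x) := by ring
          rw [he, ZMod.neg_val, if_neg]
          intro h0
          exact ht0 (by rw [h0, ZMod.val_zero])
        refine caseA hr hn1 hn2 hstar y x (fun z hz => (htrans z hz).symm) ?_ ?_ <;>
          rw [hxv] <;> omega
      · obtain ⟨t, ht⟩ : ∃ t, (y - x).val = t := ⟨_, rfl⟩
        rw [ht] at ht0 htlt hA hC
        have hB1 : n - 2*r ≤ t := by omega
        have hB2 : t ≤ 2*r := by omega
        have hy : y = x + ((t : ℕ) : ZMod n) := by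
          rw [← ht, ZMod.natCast_val, ZMod.cast_id]; ring
        rcases hstar (y + ((r+1:ℕ):ZMod n)) with h | h
        · have hdx : (cycleG n).dist x (y + ((r+1:ℕ):ZMod n)) ≤ r := by
            rw [cyc_ball hn (by omega)]
            have he : y + ((r+1:ℕ):ZMod n) - x = ((t + r + 1 : ℕ) : ZMod n) := by
              rw [hy]; push_cast; ring
            rw [he, ZMod.val_cast_of_lt (by omega : t + r + 1 < n)]
            omega
          have hdy := (htrans _ h).mp hdx
          rw [cyc_ball hn (by omega)] at hdy
          have he : y + ((r+1:ℕ):ZMod n) - y = ((r+1:ℕ):ZMod n) := by ring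
          rw [he, ZMod.val_cast_of_lt (by omega : r+1 < n)] at hdy
          omega
        · have he : y + ((r+1:ℕ):ZMod n) + ((2*r+1:ℕ):ZMod n) = y + ((3*r+2:ℕ):ZMod n) := by
            push_cast; ring
          rw [he] at h
          have hdy : (cycleG n).dist y (y + ((3*r+2:ℕ):ZMod n)) ≤ r := by
            rw [cyc_ball hn (by omega)]
            have h3 : y + ((3*r+2:ℕ):ZMod n) - y = ((3*r+2:ℕ):ZMod n) := by ring
            rw [h3, ZMod.val_natCast]
            rcases Nat.lt_or_ge (3*r+2) n with hlt | hge
            · rw [Nat.mod_eq_of_lt hlt]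
              omega
            · have h0 : (3*r+2) % n = 0 := by rw [show 3*r+2 = n by omega, Nat.mod_self]
              omega
          have hdx := (htrans _ h).mpr hdy
          rw [cyc_ball hn (by omega)] at hdx
          have h4 : y + ((3*r+2:ℕ):ZMod n) - x = ((t + 3*r+2 : ℕ):ZMod n) := by
            rw [hy]; push_cast; ring
          rw [h4, ZMod.val_natCast] at hdx
          have hmod : (t + 3*r+2) % n = t + 3*r + 2 - n := by
            rw [Nat.mod_eq_sub_mod (by omega)]
            exact Nat.mod_eq_of_lt (by omega)
          rw [hmod] at hdx
          omega
end

section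
/- For all r ≥ 1, the minimum size of an r-identifying code in the cycle C_{2r+3} equals ⌊(4r+6)/3⌋. -/
lemma cycle_adj {n : ℕ} {x y : ZMod n} :
    (cycleG n).Adj x y ↔ x ≠ y ∧ (x - y = 1 ∨ y - x = 1) := by
  simp [cycleG, SimpleGraph.fromRel_adj]

lemma exists_walk {n : ℕ} (h1 : (1 : ZMod n) ≠ 0) (x : ZMod n) (k : ℕ) :
    ∃ w : (cycleG n).Walk x (x + k), w.length = k := by
  induction k with
  | zero => exact ⟨SimpleGraph.Walk.nil.copy rfl (by push_cast; ring), by simp⟩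
  | succ k ih =>
    obtain ⟨w, hw⟩ := ih
    have hadj : (cycleG n).Adj (x + k) (x + (k+1 : ℕ)) := by
      rw [cycle_adj]
      constructor
      · intro h
        apply h1
        have : x + (k:ZMod n) + 1 = x + (k:ZMod n) + 0 := by push_cast at h ⊢; linear_combination -h
        exact add_left_cancel this
      · right; push_cast; ring
    exact ⟨w.concat hadj, by simp [hw]⟩

lemma dist_le_nat {n : ℕ} (h1 : (1 : ZMod n) ≠ 0) (x : ZMod n) (k : ℕ) :
    (cycleG n).dist x (x + k) ≤ k := by
  obtain ⟨w, hw⟩ := exists_walk h1 x k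
  calc (cycleG n).dist x (x + k) ≤ w.length := SimpleGraph.dist_le w
    _ = k := hw

lemma walk_int {n : ℕ} {x y : ZMod n} (w : (cycleG n).Walk x y) :
    ∃ t : ℤ, t.natAbs ≤ w.length ∧ (t : ZMod n) = y - x := by
  induction w with
  | nil => exact ⟨0, by simp⟩
  | @cons a b c h w ih =>
    obtain ⟨t, ht, hc⟩ := ih
    rw [cycle_adj] at h
    rcases h.2 with h2 | h2
    · exact ⟨t - 1, by simp only [SimpleGraph.Walk.length_cons]; omega,
        by push_cast; linear_combination hc + h2⟩
    · exact ⟨t + 1, by simp only [SimpleGraph.Walk.length_cons]; omega,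
        by push_cast; linear_combination hc - h2⟩

lemma natCast_val_self {n : ℕ} [NeZero n] (z : ZMod n) : ((z.val : ℕ) : ZMod n) = z :=
  ZMod.natCast_rightInverse z

lemma dist_le_iff (r : ℕ) (x y : ZMod (2*r+3)) :
    (cycleG (2*r+3)).dist x y ≤ r ↔
      (y - x ≠ (↑(r+1) : ZMod (2*r+3)) ∧ y - x ≠ ↑(r+2)) := by
  haveI : NeZero (2*r+3) := ⟨by omega⟩
  haveI : Fact (1 < 2*r+3) := ⟨by omega⟩
  have h1 : (1 : ZMod (2*r+3)) ≠ 0 := one_ne_zero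
  set k := (y - x).val with hkdef
  have hk : ((k : ℕ) : ZMod (2*r+3)) = y - x := natCast_val_self _
  have hkn : k < 2*r+3 := ZMod.val_lt _
  have hxy : y = x + (k : ZMod (2*r+3)) := by rw [hk]; ring
  constructor
  · intro hd
    have hreach : (cycleG (2*r+3)).Reachable x y := by
      obtain ⟨w, -⟩ := exists_walk h1 x k
      exact ⟨w.copy rfl hxy.symm⟩
    obtain ⟨p, hp⟩ := hreach.exists_walk_length_eq_dist
    obtain ⟨t, ht, htc⟩ := walk_int p
    rw [hp] at ht
    have htr : t.natAbs ≤ r := ht.trans hd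
    constructor <;> intro hc
    · have h0 : ((t - (r+1) : ℤ) : ZMod (2*r+3)) = 0 := by
        push_cast
        rw [htc, hc]
        push_cast
        ring
      have hdvd : ((2*r+3 : ℕ) : ℤ) ∣ (t - (r+1)) := (ZMod.intCast_zmod_eq_zero_iff_dvd _ _).mp h0
      have hdvd2 : 2*r+3 ∣ (t - (r+1)).natAbs := by
        have h := Int.natAbs_dvd_natAbs.mpr hdvd
        rwa [Int.natAbs_natCast] at h
      have := Nat.le_of_dvd (by omega) hdvd2
      omega
    · have h0 : ((t - (r+2) : ℤ) : ZMod (2*r+3)) = 0 := by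
        push_cast
        rw [htc, hc]
        push_cast
        ring
      have hdvd : ((2*r+3 : ℕ) : ℤ) ∣ (t - (r+2)) := (ZMod.intCast_zmod_eq_zero_iff_dvd _ _).mp h0
      have hdvd2 : 2*r+3 ∣ (t - (r+2)).natAbs := by
        have h := Int.natAbs_dvd_natAbs.mpr hdvd
        rwa [Int.natAbs_natCast] at h
      have := Nat.le_of_dvd (by omega) hdvd2
      omega
  · rintro ⟨hne1, hne2⟩
    have hk1 : k ≠ r + 1 := by intro h; exact hne1 (by rw [← hk, h])
    have hk2 : k ≠ r + 2 := by intro h; exact hne2 (by rw [← hk, h])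
    rcases le_or_gt k r with h | h
    · calc (cycleG (2*r+3)).dist x y
          = (cycleG (2*r+3)).dist x (x + (k:ZMod (2*r+3))) := by rw [← hxy]
        _ ≤ k := dist_le_nat h1 x k
        _ ≤ r := h
    · have hk3 : r + 3 ≤ k := by omega
      have hm : ((2*r+3 - k : ℕ) : ZMod (2*r+3)) = x - y := by
        push_cast [Nat.cast_sub hkn.le]
        rw [show ((2:ZMod (2*r+3)) * r + 3) = ((2*r+3 : ℕ) : ZMod (2*r+3)) by push_cast; ring,
          ZMod.natCast_self, hk]
        ring
      have hyx : x = y + ((2*r+3 - k : ℕ) : ZMod (2*r+3)) := by rw [hm]; ring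
      calc (cycleG (2*r+3)).dist x y = (cycleG (2*r+3)).dist y x := SimpleGraph.dist_comm ..
        _ = (cycleG (2*r+3)).dist y (y + ((2*r+3-k:ℕ) : ZMod (2*r+3))) := by rw [← hyx]
        _ ≤ 2*r+3-k := dist_le_nat h1 y (2*r+3-k)
        _ ≤ r := by omega

lemma Dr_eq (r : ℕ) (D : Set (ZMod (2*r+3))) (x : ZMod (2*r+3)) :
    Dr (cycleG (2*r+3)) r D x = D \ {x + ↑(r+1), x + ↑(r+2)} := by
  ext y
  simp only [Dr, Set.mem_setOf_eq, Set.mem_diff, Set.mem_insert_iff, Set.mem_singleton_iff,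
    not_or]
  rw [dist_le_iff]
  constructor
  · rintro ⟨hD, h1, h2⟩
    exact ⟨hD, ⟨fun h => h1 (by rw [h]; ring), fun h => h2 (by rw [h]; ring)⟩⟩
  · rintro ⟨hD, h1, h2⟩
    exact ⟨hD, fun h => h1 (by rw [← h]; ring), fun h => h2 (by rw [← h]; ring)⟩

lemma small_ne_zero (r c : ℕ) (hc : c ≠ 0) (h : c < 2*r+3) : ((c:ℕ) : ZMod (2*r+3)) ≠ 0 := by
  haveI : NeZero (2*r+3) := ⟨by omega⟩
  intro h0
  have := ZMod.val_cast_of_lt h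
  rw [h0, ZMod.val_zero] at this
  omega

lemma idcode_iff (r : ℕ) (hr : 1 ≤ r) (D : Set (ZMod (2*r+3))) :
    IsIdCode (cycleG (2*r+3)) r D ↔
      ((∀ z : ZMod (2*r+3), z ∈ D ∨ z + 2 ∈ D) ∧
       (∀ z w : ZMod (2*r+3), z ∉ D → z+1 ∉ D → w ∉ D → w+1 ∉ D → z = w)) := by
  have h1 : (1 : ZMod (2*r+3)) ≠ 0 := by
    have := small_ne_zero r 1 (by omega) (by omega); simpa using this
  have h2 : (2 : ZMod (2*r+3)) ≠ 0 := by
    have := small_ne_zero r 2 (by omega) (by omega); simpa using this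
  have h3 : (3 : ZMod (2*r+3)) ≠ 0 := by
    have := small_ne_zero r 3 (by omega) (by omega); simpa using this
  have h4 : (4 : ZMod (2*r+3)) ≠ 0 := by
    have := small_ne_zero r 4 (by omega) (by omega); simpa using this
  have hstep : ∀ x : ZMod (2*r+3), x + ↑(r+2) = x + ↑(r+1) + 1 := by
    intro x; push_cast; ring
  constructor
  · rintro ⟨hne, hinj⟩
    constructor
    · intro z
      by_contra hcon
      push_neg at hcon
      obtain ⟨hz, hz2⟩ := hcon
      have hxy : (z - ↑(r+1) : ZMod (2*r+3)) ≠ z - ↑(r+1) + 1 := by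
        intro h; apply h1; linear_combination -h
      apply hinj _ _ hxy
      rw [Dr_eq, Dr_eq]
      have e1 : (z - ↑(r+1) : ZMod (2*r+3)) + ↑(r+1) = z := by ring
      have e2 : (z - ↑(r+1) : ZMod (2*r+3)) + ↑(r+2) = z + 1 := by push_cast; ring
      have e3 : (z - ↑(r+1) + 1 : ZMod (2*r+3)) + ↑(r+1) = z + 1 := by ring
      have e4 : (z - ↑(r+1) + 1 : ZMod (2*r+3)) + ↑(r+2) = z + 2 := by push_cast; ring
      rw [e1, e2, e3, e4]
      ext a
      simp only [Set.mem_diff, Set.mem_insert_iff, Set.mem_singleton_iff, not_or]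
      constructor
      · rintro ⟨ha, -, ha1⟩
        exact ⟨ha, ha1, fun h => hz2 (h ▸ ha)⟩
      · rintro ⟨ha, ha1, -⟩
        exact ⟨ha, fun h => hz (h ▸ ha), ha1⟩
    · intro z w hz hz1 hw hw1
      by_contra hzw
      have hxy : (z - ↑(r+1) : ZMod (2*r+3)) ≠ w - ↑(r+1) := by
        intro h; apply hzw; linear_combination h
      apply hinj _ _ hxy
      rw [Dr_eq, Dr_eq]
      have e1 : (z - ↑(r+1) : ZMod (2*r+3)) + ↑(r+1) = z := by ring
      have e2 : (z - ↑(r+1) : ZMod (2*r+3)) + ↑(r+2) = z + 1 := by push_cast; ring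
      have e3 : (w - ↑(r+1) : ZMod (2*r+3)) + ↑(r+1) = w := by ring
      have e4 : (w - ↑(r+1) : ZMod (2*r+3)) + ↑(r+2) = w + 1 := by push_cast; ring
      rw [e1, e2, e3, e4]
      ext a
      simp only [Set.mem_diff, Set.mem_insert_iff, Set.mem_singleton_iff, not_or]
      constructor
      · rintro ⟨ha, -, -⟩
        exact ⟨ha, fun h => hw (h ▸ ha), fun h => hw1 (h ▸ ha)⟩
      · rintro ⟨ha, -, -⟩
        exact ⟨ha, fun h => hz (h ▸ ha), fun h => hz1 (h ▸ ha)⟩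
  · rintro ⟨q1, q2⟩
    constructor
    · intro x
      rw [Dr_eq]
      set a := x + (↑(r+1) : ZMod (2*r+3)) with ha
      rcases q1 (a + 2) with hin | hin
      · refine ⟨a + 2, hin, ?_⟩
        simp only [Set.mem_insert_iff, Set.mem_singleton_iff, not_or, ← ha, hstep x, ← ha]
        constructor
        · intro h; apply h2; linear_combination h
        · intro h; apply h1; linear_combination h
      · refine ⟨a + 2 + 2, hin, ?_⟩
        simp only [Set.mem_insert_iff, Set.mem_singleton_iff, not_or, ← ha, hstep x, ← ha]
        constructor
        · intro h; apply h4; linear_combination h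
        · intro h; apply h3; linear_combination h
    · intro x y hxy
      rw [Dr_eq, Dr_eq, hstep x, hstep y]
      set a := x + (↑(r+1) : ZMod (2*r+3)) with ha
      set b := y + (↑(r+1) : ZMod (2*r+3)) with hb
      have hab : a ≠ b := by
        intro h; apply hxy
        have := add_right_cancel h
        exact this
      intro heq
      have mem_iff : ∀ u : ZMod (2*r+3),
          (u ∈ D ∧ u ≠ a ∧ u ≠ a + 1) ↔ (u ∈ D ∧ u ≠ b ∧ u ≠ b + 1) := by
        intro u
        constructor
        · intro h
          have : u ∈ D \ {a, a+1} := by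
            simp only [Set.mem_diff, Set.mem_insert_iff, Set.mem_singleton_iff, not_or]; tauto
          rw [heq] at this
          simp only [Set.mem_diff, Set.mem_insert_iff, Set.mem_singleton_iff, not_or] at this
          tauto
        · intro h
          have : u ∈ D \ {b, b+1} := by
            simp only [Set.mem_diff, Set.mem_insert_iff, Set.mem_singleton_iff, not_or]; tauto
          rw [← heq] at this
          simp only [Set.mem_diff, Set.mem_insert_iff, Set.mem_singleton_iff, not_or] at this
          tauto
      by_cases hba1 : b = a + 1
      · rcases q1 a with hin | hin
        · have := (mem_iff a).mpr ⟨hin, hab,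
            by rw [hba1]; intro h; apply h2; linear_combination -h⟩
          exact absurd rfl this.2.1
        · have := (mem_iff (a+2)).mp ⟨hin, by intro h; apply h2; linear_combination h,
            by intro h; apply h1; linear_combination h⟩
          exact this.2.2 (by rw [hba1]; ring)
      · by_cases hab1 : a = b + 1
        · rcases q1 b with hin | hin
          · have := (mem_iff b).mp ⟨hin, fun h => hab h.symm,
              by rw [hab1]; intro h; apply h2; linear_combination -h⟩
            exact absurd rfl this.2.1
          · have := (mem_iff (b+2)).mpr ⟨hin, by intro h; apply h2; linear_combination h,
              by intro h; apply h1; linear_combination h⟩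
            exact this.2.2 (by rw [hab1]; ring)
        · -- disjoint pairs
          have hna : a ∉ D := by
            intro hin
            have := (mem_iff a).mpr ⟨hin, fun h => hab h, fun h => hab1 h⟩
            exact absurd rfl this.2.1
          have hna1 : a + 1 ∉ D := by
            intro hin
            have := (mem_iff (a+1)).mpr ⟨hin, fun h => hba1 h.symm,
              fun h => hab (add_right_cancel h)⟩
            exact absurd rfl this.2.2
          have hnb : b ∉ D := by
            intro hin
            have := (mem_iff b).mp ⟨hin, fun h => hab h.symm,
              fun h => hba1 h⟩
            exact absurd rfl this.2.1
          have hnb1 : b + 1 ∉ D := by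
            intro hin
            have := (mem_iff (b+1)).mp ⟨hin, fun h => hab1 h.symm,
              fun h => hab (add_right_cancel h).symm⟩
            exact absurd rfl this.2.2
          exact hab (q2 a b hna hna1 hnb hnb1)

lemma card_lower (r : ℕ) (hr : 1 ≤ r) (D : Set (ZMod (2*r+3)))
    (q1 : ∀ z : ZMod (2*r+3), z ∈ D ∨ z + 2 ∈ D)
    (q2 : ∀ z w : ZMod (2*r+3), z ∉ D → z+1 ∉ D → w ∉ D → w+1 ∉ D → z = w) :
    (4*r+6)/3 ≤ D.ncard := by
  haveI : NeZero (2*r+3) := ⟨by omega⟩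
  have h1 : (1 : ZMod (2*r+3)) ≠ 0 := by
    have := small_ne_zero r 1 (by omega) (by omega); simpa using this
  have h2 : (2 : ZMod (2*r+3)) ≠ 0 := by
    have := small_ne_zero r 2 (by omega) (by omega); simpa using this
  classical
  set C : Finset (ZMod (2*r+3)) := (D.toFinset)ᶜ with hCdef
  have hC : ∀ u : ZMod (2*r+3), u ∈ C ↔ u ∉ D := by
    intro u; simp [hCdef]
  -- no element z has both z and z+2 outside D
  have noskip : ∀ z : ZMod (2*r+3), ¬ (z ∈ C ∧ z + 2 ∈ C) := by
    rintro z ⟨hz, hz2⟩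
    rcases q1 z with h | h
    · exact (hC z).mp hz h
    · exact (hC _).mp hz2 h
  set f : ZMod (2*r+3) → ℕ :=
    fun z => (C.filter (fun c => c ∈ ({z, z+1, z+2} : Finset (ZMod (2*r+3))))).card with hfdef
  have hzne1 : ∀ z : ZMod (2*r+3), z ≠ z + 1 := by
    intro z h; exact h1 (by linear_combination -h)
  have hzne2 : ∀ z : ZMod (2*r+3), z ≠ z + 2 := by
    intro z h; exact h2 (by linear_combination -h)
  have hzne12 : ∀ z : ZMod (2*r+3), z + 1 ≠ z + 2 := by
    intro z h; exact h1 (by linear_combination -h)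
  -- double counting
  have hsum : C.card * 3 = ∑ z : ZMod (2*r+3), f z := by
    have key : ∀ c : ZMod (2*r+3),
        (Finset.univ.filter (fun z => c ∈ ({z, z+1, z+2} : Finset (ZMod (2*r+3))))).card = 3 := by
      intro c
      have heq : Finset.univ.filter (fun z => c ∈ ({z, z+1, z+2} : Finset (ZMod (2*r+3))))
          = {c, c-1, c-2} := by
        ext z
        simp only [Finset.mem_filter, Finset.mem_univ, true_and, Finset.mem_insert,
          Finset.mem_singleton]
        constructor
        · rintro (h | h | h)
          · exact Or.inl h.symm
          · exact Or.inr (Or.inl (by linear_combination -h))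
          · exact Or.inr (Or.inr (by linear_combination -h))
        · rintro (h | h | h)
          · exact Or.inl h.symm
          · exact Or.inr (Or.inl (by linear_combination -h))
          · exact Or.inr (Or.inr (by linear_combination -h))
      rw [heq]
      rw [Finset.card_insert_of_notMem, Finset.card_insert_of_notMem, Finset.card_singleton]
      · simp only [Finset.mem_singleton]
        intro h; exact h1 (by linear_combination h)
      · simp only [Finset.mem_insert, Finset.mem_singleton]
        rintro (h | h)
        · exact h1 (by linear_combination h)
        · exact h2 (by linear_combination h)
    calc C.card * 3 = ∑ c ∈ C, 3 := by rw [Finset.sum_const, smul_eq_mul]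
      _ = ∑ c ∈ C, (Finset.univ.filter
            (fun z => c ∈ ({z, z+1, z+2} : Finset (ZMod (2*r+3))))).card := by
          exact Finset.sum_congr rfl (fun c _ => (key c).symm)
      _ = ∑ c ∈ C, ∑ z : ZMod (2*r+3),
            if c ∈ ({z, z+1, z+2} : Finset (ZMod (2*r+3))) then 1 else 0 := by
          exact Finset.sum_congr rfl (fun c _ => Finset.card_filter _ _)
      _ = ∑ z : ZMod (2*r+3), ∑ c ∈ C,
            if c ∈ ({z, z+1, z+2} : Finset (ZMod (2*r+3))) then 1 else 0 := Finset.sum_comm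
      _ = ∑ z : ZMod (2*r+3), f z := by
          exact Finset.sum_congr rfl (fun z _ => (Finset.card_filter _ _).symm)
  -- if f z ≥ 2 then there's an adjacent pair at z or z+1
  have pair_of_two : ∀ z : ZMod (2*r+3), 1 < f z →
      (z ∈ C ∧ z + 1 ∈ C) ∨ (z + 1 ∈ C ∧ z + 2 ∈ C) := by
    intro z hf
    obtain ⟨a, ha, b, hb, hab⟩ := Finset.one_lt_card.mp hf
    simp only [Finset.mem_filter, Finset.mem_insert, Finset.mem_singleton] at ha hb
    obtain ⟨haC, ha3⟩ := ha
    obtain ⟨hbC, hb3⟩ := hb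
    rcases ha3 with ha3 | ha3 | ha3 <;> rcases hb3 with hb3 | hb3 | hb3
    · exact absurd (ha3.trans hb3.symm) hab
    · exact Or.inl ⟨ha3 ▸ haC, hb3 ▸ hbC⟩
    · exact absurd ⟨ha3 ▸ haC, hb3 ▸ hbC⟩ (noskip z)
    · exact Or.inl ⟨hb3 ▸ hbC, ha3 ▸ haC⟩
    · exact absurd (ha3.trans hb3.symm) hab
    · exact Or.inr ⟨ha3 ▸ haC, hb3 ▸ hbC⟩
    · exact absurd ⟨hb3 ▸ hbC, ha3 ▸ haC⟩ (noskip z)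
    · exact Or.inr ⟨hb3 ▸ hbC, ha3 ▸ haC⟩
    · exact absurd (ha3.trans hb3.symm) hab
  -- f z ≤ 2 always
  have f_le_two : ∀ z : ZMod (2*r+3), f z ≤ 2 := by
    intro z
    by_contra hcon
    push_neg at hcon
    have hsub : C.filter (fun c => c ∈ ({z, z+1, z+2} : Finset (ZMod (2*r+3))))
        ⊆ ({z, z+1, z+2} : Finset (ZMod (2*r+3))) := by
      intro c hc
      exact (Finset.mem_filter.mp hc).2
    have hcard3 : ({z, z+1, z+2} : Finset (ZMod (2*r+3))).card ≤ 3 := by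
      apply (Finset.card_insert_le _ _).trans
      have := Finset.card_insert_le (z+1) ({z+2} : Finset (ZMod (2*r+3)))
      simp only [Finset.card_singleton] at this
      omega
    have hfz : f z = (C.filter (fun c => c ∈ ({z, z+1, z+2} : Finset (ZMod (2*r+3))))).card :=
      rfl
    have heq := Finset.eq_of_subset_of_card_le hsub (by omega)
    have hzin : z ∈ C ∧ z + 2 ∈ C := by
      constructor
      · have : z ∈ ({z, z+1, z+2} : Finset (ZMod (2*r+3))) := by simp
        rw [← heq] at this
        exact (Finset.mem_filter.mp this).1
      · have : z + 2 ∈ ({z, z+1, z+2} : Finset (ZMod (2*r+3))) := by simp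
        rw [← heq] at this
        exact (Finset.mem_filter.mp this).1
    exact noskip z hzin
  have main : ∑ z : ZMod (2*r+3), f z ≤ 2*r+5 := by
    by_cases hpair : ∃ z0 : ZMod (2*r+3), z0 ∈ C ∧ z0 + 1 ∈ C
    · obtain ⟨z0, hz0, hz01⟩ := hpair
      have huniq : ∀ z : ZMod (2*r+3), z ∈ C → z + 1 ∈ C → z = z0 :=
        fun z hz hz1 => q2 z z0 ((hC z).mp hz) ((hC _).mp hz1) ((hC z0).mp hz0) ((hC _).mp hz01)
      have hbound : ∀ z : ZMod (2*r+3), f z ≤ 1 + (if z = z0 ∨ z = z0 - 1 then 1 else 0) := by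
        intro z
        by_cases hf : 1 < f z
        · rcases pair_of_two z hf with ⟨ha, hb⟩ | ⟨ha, hb⟩
          · have : z = z0 := huniq z ha hb
            rw [if_pos (Or.inl this)]
            exact (f_le_two z).trans (by norm_num)
          · have : z + 1 = z0 := huniq (z+1) ha (by
              have e : z + 1 + 1 = z + 2 := by ring
              rw [e]; exact hb)
            have : z = z0 - 1 := by linear_combination this
            rw [if_pos (Or.inr this)]
            exact (f_le_two z).trans (by norm_num)
        · push_neg at hf
          omega
      calc ∑ z : ZMod (2*r+3), f z
          ≤ ∑ z : ZMod (2*r+3), (1 + (if z = z0 ∨ z = z0 - 1 then 1 else 0)) :=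
            Finset.sum_le_sum (fun z _ => hbound z)
        _ = Fintype.card (ZMod (2*r+3)) +
            ∑ z : ZMod (2*r+3), (if z = z0 ∨ z = z0 - 1 then 1 else 0) := by
            rw [Finset.sum_add_distrib, Finset.sum_const, smul_eq_mul, mul_one,
              Finset.card_univ]
        _ ≤ 2*r+3 + 2 := by
            have hcard := ZMod.card (2*r+3)
            have : ∑ z : ZMod (2*r+3), (if z = z0 ∨ z = z0 - 1 then 1 else 0)
                = (Finset.univ.filter (fun z : ZMod (2*r+3) => z = z0 ∨ z = z0 - 1)).card :=
              (Finset.card_filter _ _).symm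
            rw [this, hcard]
            have hsub2 : Finset.univ.filter (fun z : ZMod (2*r+3) => z = z0 ∨ z = z0 - 1)
                ⊆ ({z0, z0 - 1} : Finset (ZMod (2*r+3))) := by
              intro c hc
              simp only [Finset.mem_filter, Finset.mem_univ, true_and] at hc
              simp only [Finset.mem_insert, Finset.mem_singleton]
              exact hc
            have := Finset.card_le_card hsub2
            have hle2 : ({z0, z0 - 1} : Finset (ZMod (2*r+3))).card ≤ 2 := by
              apply (Finset.card_insert_le _ _).trans
              simp
            omega
        _ = 2*r+5 := by ring
    · push_neg at hpair
      have hbound : ∀ z : ZMod (2*r+3), f z ≤ 1 := by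
        intro z
        by_contra hcon
        push_neg at hcon
        rcases pair_of_two z hcon with ⟨ha, hb⟩ | ⟨ha, hb⟩
        · exact hpair z ha hb
        · exact hpair (z+1) ha (by
            have e : z + 1 + 1 = z + 2 := by ring
            rw [e]; exact hb)
      calc ∑ z : ZMod (2*r+3), f z ≤ ∑ _z : ZMod (2*r+3), 1 :=
            Finset.sum_le_sum (fun z _ => hbound z)
        _ = Fintype.card (ZMod (2*r+3)) := by
            rw [Finset.sum_const, smul_eq_mul, mul_one, Finset.card_univ]
        _ ≤ 2*r+5 := by rw [ZMod.card]; omega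
  have hcards : D.toFinset.card + C.card = 2*r+3 := by
    have := Finset.card_add_card_compl (D.toFinset)
    rw [ZMod.card] at this
    exact this
  have hncard : D.ncard = D.toFinset.card := Set.ncard_eq_toFinset_card' D
  have hfin : C.card * 3 ≤ 2*r+5 := by rw [hsum]; exact main
  omega

lemma witness (r : ℕ) (hr : 1 ≤ r) :
    ∃ D : Set (ZMod (2*r+3)), IsIdCode (cycleG (2*r+3)) r D ∧ D.ncard = (4*r+6)/3 := by
  haveI : NeZero (2*r+3) := ⟨by omega⟩
  classical
  set m := (2*r+5)/3 - 1 with hm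
  have hm1 : 1 ≤ m := by omega
  have hm2 : 3*m ≤ 2*r + 2 := by omega
  set Cw : Finset (ZMod (2*r+3)) :=
    insert 0 ((Finset.range m).image (fun j => ((1+3*j : ℕ) : ZMod (2*r+3)))) with hCw
  have hvlt : ∀ j, j < m → 1+3*j < 2*r+3 := by intro j hj; omega
  have mem_iff : ∀ z : ZMod (2*r+3), z ∈ Cw ↔ (z.val = 0 ∨ ∃ j, j < m ∧ z.val = 1+3*j) := by
    intro z
    simp only [hCw, Finset.mem_insert, Finset.mem_image, Finset.mem_range]
    constructor
    · rintro (rfl | ⟨j, hj, rfl⟩)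
      · left; exact ZMod.val_zero
      · right; exact ⟨j, hj, ZMod.val_cast_of_lt (hvlt j hj)⟩
    · rintro (h0 | ⟨j, hj, hv⟩)
      · left; rw [← natCast_val_self z, h0]; simp
      · right; exact ⟨j, hj, by rw [← natCast_val_self z, hv]⟩
  have val_add : ∀ (z : ZMod (2*r+3)) (c : ℕ), z.val + c < 2*r+3 →
      (z + c).val = z.val + c := by
    intro z c h
    have e : z + c = ((z.val + c : ℕ) : ZMod (2*r+3)) := by
      push_cast
      rw [natCast_val_self]
    rw [e, ZMod.val_cast_of_lt h]
  have val_bound : ∀ z : ZMod (2*r+3), z ∈ Cw → z.val ≤ 3*m - 2 := by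
    intro z hz
    rw [mem_iff] at hz
    rcases hz with h | ⟨j, hj, h⟩ <;> omega
  have noskip : ∀ z : ZMod (2*r+3), z ∈ Cw → z + 2 ∈ Cw → False := by
    intro z hz hz2
    have hb := val_bound z hz
    have hval2 : ((z + (2:ℕ) : ZMod (2*r+3))).val = z.val + 2 := val_add z 2 (by omega)
    have hz2' := hz2
    rw [mem_iff] at hz hz2'
    have e2 : (z + 2 : ZMod (2*r+3)) = z + ((2:ℕ) : ZMod (2*r+3)) := by push_cast; ring
    rw [e2, hval2] at hz2'
    rcases hz with h | ⟨j, hj, h⟩ <;> rcases hz2' with h' | ⟨j', hj', h'⟩ <;> omega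
  have pairzero : ∀ z : ZMod (2*r+3), z ∈ Cw → z + 1 ∈ Cw → z = 0 := by
    intro z hz hz1
    have hb := val_bound z hz
    have hval1 : ((z + (1:ℕ) : ZMod (2*r+3))).val = z.val + 1 := val_add z 1 (by omega)
    have hz1' := hz1
    rw [mem_iff] at hz hz1'
    have e1 : (z + 1 : ZMod (2*r+3)) = z + ((1:ℕ) : ZMod (2*r+3)) := by push_cast; ring
    rw [e1, hval1] at hz1'
    have hz0 : z.val = 0 := by
      rcases hz with h | ⟨j, hj, h⟩ <;> rcases hz1' with h' | ⟨j', hj', h'⟩ <;> omega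
    rw [← natCast_val_self z, hz0]
    simp
  -- cardinality of Cw
  have hinj : Set.InjOn (fun j => ((1+3*j : ℕ) : ZMod (2*r+3))) (Finset.range m) := by
    intro a ha b hb h
    simp only [Finset.coe_range, Set.mem_Iio] at ha hb
    have := congrArg ZMod.val h
    simp only at this
    rw [ZMod.val_cast_of_lt (hvlt a ha), ZMod.val_cast_of_lt (hvlt b hb)] at this
    omega
  have h0notin : (0 : ZMod (2*r+3)) ∉
      (Finset.range m).image (fun j => ((1+3*j : ℕ) : ZMod (2*r+3))) := by
    simp only [Finset.mem_image, Finset.mem_range]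
    rintro ⟨j, hj, hc⟩
    have := congrArg ZMod.val hc
    rw [ZMod.val_cast_of_lt (hvlt j hj), ZMod.val_zero] at this
    omega
  have hCwcard : Cw.card = m + 1 := by
    rw [hCw, Finset.card_insert_of_notMem h0notin, Finset.card_image_of_injOn hinj,
      Finset.card_range]
  refine ⟨(↑(Cwᶜ) : Set (ZMod (2*r+3))), ?_, ?_⟩
  · have hmemD : ∀ z : ZMod (2*r+3), z ∈ (↑(Cwᶜ) : Set (ZMod (2*r+3))) ↔ z ∉ Cw := by
      intro z; simp
    rw [idcode_iff r hr]
    constructor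
    · intro z
      by_cases hz : z ∈ Cw
      · right; rw [hmemD]; intro hz2; exact noskip z hz hz2
      · left; rw [hmemD]; exact hz
    · intro z w hz hz1 hw hw1
      rw [hmemD, not_not] at hz hw
      rw [hmemD, not_not] at hz1 hw1
      rw [pairzero z hz hz1, pairzero w hw hw1]
  · rw [Set.ncard_coe_finset, Finset.card_compl, hCwcard, ZMod.card]
    omega

theorem stmt8 (r : ℕ) (hr : 1 ≤ r) :
    IsLeast {m | ∃ D : Set (ZMod (2*r+3)),
        IsIdCode (cycleG (2*r+3)) r D ∧ D.ncard = m} ((4*r+6)/3) := by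
  constructor
  · obtain ⟨D, hD, hcard⟩ := witness r hr
    exact ⟨D, hD, hcard⟩
  · rintro m ⟨D, hD, rfl⟩
    obtain ⟨q1, q2⟩ := (idcode_iff r hr D).mp hD
    exact card_lower r hr D q1 q2
end
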